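/- Let φ be a CP-semigroup on a von Neumann algebra M ⊆ B(H). Then for every A ∈ M and ξ ∈ H, the map t ↦ φ_t(A)ξ from [0,∞) to H is continuous from the right in norm: for every t ≥ 0, lim_{h→0+} ‖φ_{t+h}(A)ξ − φ_t(A)ξ‖ = 0. -/

import Mathlib

open scoped InnerProductSpace ComplexOrder
open Filter Topology MeasureTheory

/-- A functional `ω` on `B(H)` is *σ-weakly continuous on `M`* if on `M` it agrees with a
functional of the form `X ↦ ∑ₙ ⟪ξₙ, X ηₙ⟫` with `∑ ‖ξₙ‖² < ∞` and `∑ ‖ηₙ‖² < ∞`. -/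
def NormalFunctionalOn {H : Type*} [NormedAddCommGroup H] [InnerProductSpace ℂ H]
    [CompleteSpace H] (M : Set (H →L[ℂ] H)) (ω : (H →L[ℂ] H) → ℂ) : Prop :=
  ∃ ξ η : ℕ → H, (Summable fun n => ‖ξ n‖ ^ 2) ∧ (Summable fun n => ‖η n‖ ^ 2) ∧
    ∀ X ∈ M, ω X = ∑' n, ⟪ξ n, X (η n)⟫_ℂ

/-- A sequence of operators converges in the σ-strong* topology. -/
def SigmaStrongStarTendsto {H : Type*} [NormedAddCommGroup H] [InnerProductSpace ℂ H]
    [CompleteSpace H] (A : ℕ → H →L[ℂ] H) (L : H →L[ℂ] H) : Prop :=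
  ∀ ξ : ℕ → H, (Summable fun k => ‖ξ k‖ ^ 2) →
    Filter.Tendsto
      (fun n => (∑' k, ‖A n (ξ k) - L (ξ k)‖ ^ 2) +
        ∑' k, ‖star (A n) (ξ k) - star L (ξ k)‖ ^ 2)
      Filter.atTop (nhds 0)

/-- A sequence of operators converges in the σ-weak topology. -/
def SigmaWeakTendsto {H : Type*} [NormedAddCommGroup H] [InnerProductSpace ℂ H]
    [CompleteSpace H] (A : ℕ → H →L[ℂ] H) (L : H →L[ℂ] H) : Prop :=
  ∀ ξ η : ℕ → H, (Summable fun k => ‖ξ k‖ ^ 2) → (Summable fun k => ‖η k‖ ^ 2) →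
    Filter.Tendsto (fun n => ∑' k, ⟪ξ k, A n (η k)⟫_ℂ)
      Filter.atTop (nhds (∑' k, ⟪ξ k, L (η k)⟫_ℂ))

/-- A CP-semigroup on a von Neumann algebra `M ⊆ B(H)`: a semigroup `{φ_t}_{t ≥ 0}` of
contractive, normal, completely positive linear maps of `M` into itself, with `φ₀ = id`,
which is continuous in the point-weak operator topology. -/
structure CPSemigroup {H : Type*} [NormedAddCommGroup H] [InnerProductSpace ℂ H]
    [CompleteSpace H] (M : VonNeumannAlgebra H) where
  φ : ℝ → (H →L[ℂ] H) →ₗ[ℂ] (H →L[ℂ] H)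
  mapsTo : ∀ t : ℝ, 0 ≤ t → ∀ A ∈ M, φ t A ∈ M
  contractive : ∀ t : ℝ, 0 ≤ t → ∀ A ∈ M, ‖φ t A‖ ≤ ‖A‖
  normal : ∀ t : ℝ, 0 ≤ t → ∀ ω : (H →L[ℂ] H) → ℂ,
    NormalFunctionalOn (M : Set (H →L[ℂ] H)) ω →
    NormalFunctionalOn (M : Set (H →L[ℂ] H)) fun A => ω (φ t A)
  completelyPositive : ∀ t : ℝ, 0 ≤ t → ∀ n : ℕ, ∀ A : Fin n → (H →L[ℂ] H),
    (∀ i, A i ∈ M) → ∀ ξ : Fin n → H,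
    0 ≤ ∑ i, ∑ j, ⟪ξ i, φ t (star (A i) * A j) (ξ j)⟫_ℂ
  map_id : ∀ A ∈ M, φ 0 A = A
  semigroup : ∀ s t : ℝ, 0 ≤ s → 0 ≤ t → ∀ A ∈ M, φ (s + t) A = φ s (φ t A)
  pointWeakContinuous : ∀ A ∈ M, ∀ ξ η : H, ∀ t₀ : ℝ, 0 ≤ t₀ →
    Filter.Tendsto (fun t => ⟪η, φ t A ξ⟫_ℂ) (nhdsWithin t₀ (Set.Ici 0))
      (nhds ⟪η, φ t₀ A ξ⟫_ℂ)

/-- Membership in the domain `D(δ)` of the generator of a CP-semigroup. -/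
def CPSemigroup.InDomain {H : Type*} [NormedAddCommGroup H] [InnerProductSpace ℂ H]
    [CompleteSpace H] {M : VonNeumannAlgebra H} (S : CPSemigroup M)
    (A : H →L[ℂ] H) : Prop :=
  A ∈ M ∧ ∃ D ∈ M, ∀ ω : (H →L[ℂ] H) → ℂ,
    NormalFunctionalOn (M : Set (H →L[ℂ] H)) ω →
    Filter.Tendsto (fun t : ℝ => (t : ℂ)⁻¹ * (ω (S.φ t A) - ω A))
      (nhdsWithin 0 (Set.Ioi 0)) (nhds (ω D))


/- Write `B = φ_t(A)`, so that `φ_{t+h}(A)ξ = φ_h(B)ξ`. This converges weakly to `Bξ`, so norm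
convergence follows once `‖φ_h(B)ξ‖²` is dominated by something tending to `‖Bξ‖²`. The
Kadison–Schwarz inequality `‖φ_h(B)ξ‖² ≤ ⟪ξ, φ_h(B*B)ξ⟫`, which comes from complete positivity
for the pair `(1, B)` together with `φ_h(1) ≤ 1`, provides this, as
`⟪ξ, φ_h(B*B)ξ⟫ → ⟪ξ, B*Bξ⟫ = ‖Bξ‖²`. -/

open ComplexConjugate

theorem tendsto_of_tendsto_inner_of_norm_sq_le {𝕜 E ι : Type*} [RCLike 𝕜]
    [NormedAddCommGroup E] [InnerProductSpace 𝕜 E] {l : Filter ι} {f : ι → E} {g : ι → ℝ}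
    {x : E} (h_inner : Tendsto (fun i => ⟪x, f i⟫_𝕜) l (𝓝 ⟪x, x⟫_𝕜))
    (hg : Tendsto g l (𝓝 (‖x‖ ^ 2))) (hfg : ∀ᶠ i in l, ‖f i‖ ^ 2 ≤ g i) :
    Tendsto f l (𝓝 x) := by
  have h_re : Tendsto (fun i => RCLike.re ⟪x, f i⟫_𝕜) l (𝓝 (‖x‖ ^ 2)) := by
    simpa only [Function.comp_def, inner_self_eq_norm_sq]
      using (RCLike.continuous_re.tendsto _).comp h_inner
  have h_bound : Tendsto (fun i => g i - 2 * RCLike.re ⟪x, f i⟫_𝕜 + ‖x‖ ^ 2) l (𝓝 0) := by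
    convert (hg.sub (h_re.const_mul 2)).add_const (‖x‖ ^ 2) using 2
    ring
  have h_sq : Tendsto (fun i => ‖f i - x‖ ^ 2) l (𝓝 0) := by
    refine squeeze_zero' (.of_forall fun _ => sq_nonneg _) ?_ h_bound
    filter_upwards [hfg] with i hi
    rw [norm_sub_sq (𝕜 := 𝕜), inner_re_symm]
    linarith
  rw [tendsto_iff_norm_sub_tendsto_zero]
  simpa only [Function.comp_def, Real.sqrt_sq (norm_nonneg _), Real.sqrt_zero]
    using (Real.continuous_sqrt.tendsto 0).comp h_sq

/- Testing `c = 1, -1, i` forces `v = n` (the form is Hermitian); then `c = -1` gives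
`w ≥ 2n - a ≥ n`. -/
theorem Complex.le_re_of_forall_quadratic_nonneg {a v w : ℂ} {n : ℝ}
    (h_pos : ∀ c : ℂ, 0 ≤ conj c * c * a + conj c * n + c * v + w) (ha : a.re ≤ n) :
    n ≤ w.re := by
  have h1 := h_pos 1
  have h2 := h_pos (-1)
  have h3 := h_pos I
  simp only [Complex.le_def, map_one, map_neg, conj_I, one_mul, mul_one, neg_mul, mul_neg,
    neg_neg, I_mul_I, add_re, add_im, neg_re, neg_im, mul_re, mul_im, I_re, I_im, ofReal_re,
    ofReal_im, zero_re, zero_im] at h1 h2 h3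
  linarith [h1.1, h1.2, h2.1, h2.2, h3.1, h3.2]

namespace CPSemigroup

variable {H : Type*} [NormedAddCommGroup H] [InnerProductSpace ℂ H] [CompleteSpace H]
  {M : VonNeumannAlgebra H} (S : CPSemigroup M)

theorem re_inner_map_one_le {s : ℝ} (hs : 0 ≤ s) (η : H) :
    (⟪η, S.φ s 1 η⟫_ℂ).re ≤ ‖η‖ ^ 2 := by
  have h_one : ‖S.φ s 1‖ ≤ 1 :=
    (S.contractive s hs 1 (one_mem M)).trans ContinuousLinearMap.norm_id_le
  calc (⟪η, S.φ s 1 η⟫_ℂ).re ≤ ‖η‖ * ‖S.φ s 1 η‖ :=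
        (Complex.re_le_norm _).trans (norm_inner_le_norm _ _)
    _ ≤ ‖η‖ * ‖η‖ := by
        gcongr
        simpa using (S.φ s 1).le_of_opNorm_le h_one η
    _ = ‖η‖ ^ 2 := (sq _).symm

theorem completelyPositive_pair_one {s : ℝ} (hs : 0 ≤ s) {B : H →L[ℂ] H} (hB : B ∈ M)
    (η ξ : H) (c : ℂ) :
    0 ≤ conj c * c * ⟪η, S.φ s 1 η⟫_ℂ + conj c * ⟪η, S.φ s B ξ⟫_ℂ
      + c * ⟪ξ, S.φ s (star B) η⟫_ℂ + ⟪ξ, S.φ s (star B * B) ξ⟫_ℂ := by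
  have hmem : ∀ i, ![1, B] i ∈ M := Fin.forall_fin_two.2 ⟨one_mem M, hB⟩
  convert S.completelyPositive s hs 2 ![1, B] hmem ![c • η, ξ] using 1
  simp only [Fin.sum_univ_two, Matrix.cons_val_zero, Matrix.cons_val_one, star_one, one_mul,
    mul_one, map_smul, inner_smul_left, inner_smul_right]
  ring

theorem norm_sq_map_apply_le {s : ℝ} (hs : 0 ≤ s) {B : H →L[ℂ] H} (hB : B ∈ M) (ξ : H) :
    ‖S.φ s B ξ‖ ^ 2 ≤ (⟪ξ, S.φ s (star B * B) ξ⟫_ℂ).re := by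
  have h_pos := S.completelyPositive_pair_one hs hB (S.φ s B ξ) ξ
  simp_rw [inner_self_eq_norm_sq_to_K, ← RCLike.ofReal_pow] at h_pos
  exact Complex.le_re_of_forall_quadratic_nonneg h_pos (S.re_inner_map_one_le hs _)

theorem tendsto_map_apply_nhdsGT_zero {B : H →L[ℂ] H} (hB : B ∈ M) (ξ : H) :
    Tendsto (fun h => S.φ h B ξ) (𝓝[>] 0) (𝓝 (B ξ)) := by
  have hBB : star B * B ∈ M := mul_mem (star_mem hB) hB
  have h_gt_ge : 𝓝[>] (0 : ℝ) ≤ 𝓝[≥] 0 := nhdsWithin_mono 0 Set.Ioi_subset_Ici_self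
  have h_inner := (S.pointWeakContinuous B hB ξ (B ξ) 0 le_rfl).mono_left h_gt_ge
  have h_bound := ((Complex.continuous_re.tendsto _).comp
    (S.pointWeakContinuous _ hBB ξ ξ 0 le_rfl)).mono_left h_gt_ge
  have h_norm_sq : (⟪ξ, (star B * B) ξ⟫_ℂ).re = ‖B ξ‖ ^ 2 :=
    (B.apply_norm_sq_eq_inner_adjoint_right ξ).symm
  rw [S.map_id B hB] at h_inner
  rw [S.map_id _ hBB, h_norm_sq] at h_bound
  exact tendsto_of_tendsto_inner_of_norm_sq_le h_inner h_bound
    (eventually_nhdsWithin_of_forall fun h hh => S.norm_sq_map_apply_le hh.le hB ξ)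

end CPSemigroup

/-- For every `A ∈ M` and `ξ ∈ H`, the map `t ↦ φ_t(A)ξ` is continuous from the right in
norm: for every `t ≥ 0`, `‖φ_{t+h}(A)ξ − φ_t(A)ξ‖ → 0` as `h → 0+`. -/
theorem cpSemigroup_right_continuous {H : Type*} [NormedAddCommGroup H]
    [InnerProductSpace ℂ H] [CompleteSpace H] {M : VonNeumannAlgebra H}
    (S : CPSemigroup M) (A : H →L[ℂ] H) (hA : A ∈ M) (ξ : H) (t : ℝ) (ht : 0 ≤ t) :
    Filter.Tendsto (fun h : ℝ => ‖S.φ (t + h) A ξ - S.φ t A ξ‖)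
      (nhdsWithin 0 (Set.Ioi 0)) (nhds 0) := by
  have h_shift : ∀ h ∈ Set.Ioi (0 : ℝ), S.φ (t + h) A = S.φ h (S.φ t A) := fun h hh => by
    rw [add_comm, S.semigroup h t hh.le ht A hA]
  refine tendsto_iff_norm_sub_tendsto_zero.1 ?_
  refine (S.tendsto_map_apply_nhdsGT_zero (S.mapsTo t ht A hA) ξ).congr' ?_
  filter_upwards [self_mem_nhdsWithin] with h hh
  rw [h_shift h hh]
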